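/- arXiv:math/0604026 — 5 statements merged into one kernel-verified Lean document; each statement's English description precedes it below -/
import Mathlib

section
/- For every integer j ≥ 1 and every λ with 0 < λ < 1, one has ∫₀^λ t^{2j}/(1−t²)^{j+1} dt = (−1)^j ((1/2)_j/(2·j!)) · ln((1+λ)/(1−λ)) + (1/(2jλ)) · Σ_{n=0}^{j−1} (−1)^n ((1/2−j)_n/(1−j)_n) · (λ²/(1−λ²))^{j−n}. For j = 0 the identity reads ∫₀^λ dt/(1−t²) = (1/2)·ln((1+λ)/(1−λ)). -/
/-!
Write `I_j(t) = t^{2j} / (1 - t²)^{j+1}`. Differentiating `t^{2j+1} / (1 - t²)^{j+1}` gives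
`(2j+1) I_j + (2j+2) I_{j+1}`, so `J_j(λ) = ∫₀^λ I_j` satisfies the reduction formula
`(2j+2) J_{j+1} + (2j+1) J_j = λ^{2j+1} / (1 - λ²)^{j+1}`, starting from
`J_0(λ) = artanh λ = ½ log((1+λ)/(1-λ))`. The claimed closed form obeys the same recurrence:
its logarithmic coefficient because `(1/2)_{j+1} = (1/2)_j (j + 1/2)`, and its rational part because
`(-1/2-j)_{n+1} / (-j)_{n+1} = ((2j+1)/(2j)) (1/2-j)_n / (1-j)_n`, which shifts the sum over `n` by
one and leaves exactly the new top term `λ^{2j+1} / (1 - λ²)^{j+1}`. Induction on `j` concludes.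
-/

open Real Finset

/-- Pochhammer symbol `(a)_n = a (a+1) ⋯ (a+n-1)`. -/
noncomputable def poch (a : ℝ) (n : ℕ) : ℝ := ∏ i ∈ Finset.range n, (a + i)

lemma poch_zero (a : ℝ) : poch a 0 = 1 := prod_range_zero _

lemma poch_succ_right (a : ℝ) (n : ℕ) : poch a (n + 1) = poch a n * (a + n) :=
  prod_range_succ _ _

lemma poch_succ_left (a : ℝ) (n : ℕ) : poch a (n + 1) = a * poch (a + 1) n := by
  rw [poch, prod_range_succ', mul_comm, Nat.cast_zero, add_zero, poch]
  congr 1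
  refine prod_congr rfl fun i _ => ?_
  push_cast
  ring

noncomputable def logCoeff (j : ℕ) : ℝ := (-1) ^ j * (poch (1/2) j / (2 * (Nat.factorial j : ℝ)))

noncomputable def rationalCoeff (j n : ℕ) : ℝ :=
  (-1) ^ n * (poch (1/2 - (j : ℝ)) n / poch (1 - (j : ℝ)) n)

noncomputable def rationalPart (j : ℕ) (l : ℝ) : ℝ :=
  (1 / (2 * (j : ℝ) * l)) * ∑ n ∈ range j, rationalCoeff j n * (l ^ 2 / (1 - l ^ 2)) ^ (j - n)

lemma logCoeff_succ (j : ℕ) :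
    (2 * j + 2) * logCoeff (j + 1) + (2 * j + 1) * logCoeff j = 0 := by
  simp only [logCoeff, poch_succ_right, Nat.factorial_succ, pow_succ]
  push_cast
  field_simp
  ring

lemma rationalCoeff_zero (j : ℕ) : rationalCoeff j 0 = 1 := by
  simp [rationalCoeff, poch_zero]

-- At `j = 0` both sides vanish through the convention `x / 0 = 0`.
lemma rationalCoeff_succ_succ (j n : ℕ) :
    rationalCoeff (j + 1) (n + 1) = -((2 * j + 1) / (2 * j)) * rationalCoeff j n := by
  have hnum : (1 / 2 - ((j + 1 : ℕ) : ℝ)) + 1 = 1 / 2 - j := by push_cast; ring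
  have hden : (1 - ((j + 1 : ℕ) : ℝ)) + 1 = 1 - j := by push_cast; ring
  have hratio :
      (1 / 2 - ((j + 1 : ℕ) : ℝ)) / (1 - ((j + 1 : ℕ) : ℝ)) = (2 * j + 1) / (2 * j) := by
    rcases eq_or_ne (j : ℝ) 0 with hj | hj
    · simp [hj]
    · push_cast
      rw [show (1 : ℝ) - (j + 1) = -j by ring,
        show (1 / 2 : ℝ) - (j + 1) = -((2 * j + 1) / 2) by ring, neg_div_neg_eq]
      field_simp
  rw [rationalCoeff, poch_succ_left, poch_succ_left, hnum, hden, mul_div_mul_comm, hratio,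
    rationalCoeff, pow_succ]
  ring

lemma rationalPart_succ (j : ℕ) {l : ℝ} (hl : l ≠ 0) :
    (2 * j + 2) * rationalPart (j + 1) l + (2 * j + 1) * rationalPart j l
      = l ^ (2 * j + 1) / (1 - l ^ 2) ^ (j + 1) := by
  simp only [rationalPart, sum_range_succ', rationalCoeff_succ_succ, rationalCoeff_zero,
    Nat.add_sub_add_right, Nat.sub_zero, mul_assoc, ← mul_sum]
  push_cast
  rw [div_pow, ← pow_mul]
  field_simp
  ring

noncomputable def integrand (j : ℕ) (t : ℝ) : ℝ := t ^ (2 * j) / (1 - t ^ 2) ^ (j + 1)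

lemma one_sub_sq_ne_zero {x : ℝ} (hx : x ∈ Set.Ioo (-1) 1) : 1 - x ^ 2 ≠ 0 := by
  nlinarith [hx.1, hx.2]

lemma uIcc_zero_subset_Ioo {l : ℝ} (hl : l ∈ Set.Ioo (-1) 1) :
    Set.uIcc 0 l ⊆ Set.Ioo (-1 : ℝ) 1 :=
  Set.ordConnected_Ioo.uIcc_subset (by norm_num) hl

lemma hasDerivAt_half_log_div {x : ℝ} (hx : x ∈ Set.Ioo (-1) 1) :
    HasDerivAt (fun t => 1 / 2 * log ((1 + t) / (1 - t))) (1 / (1 - x ^ 2)) x := by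
  have hplus : 1 + x ≠ 0 := by linarith [hx.1]
  have hminus : 1 - x ≠ 0 := by linarith [hx.2]
  have hsq := one_sub_sq_ne_zero hx
  have hdiv := ((hasDerivAt_id x).const_add 1).div ((hasDerivAt_id x).const_sub 1) hminus
  refine ((hdiv.log (div_ne_zero hplus hminus)).const_mul (1 / 2)).congr_deriv ?_
  simp only [id, Pi.div_apply]
  field_simp
  ring

lemma hasDerivAt_reduction (j : ℕ) {x : ℝ} (hx : 1 - x ^ 2 ≠ 0) :
    HasDerivAt (fun t => t ^ (2 * j + 1) / (1 - t ^ 2) ^ (j + 1))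
      ((2 * j + 1) * integrand j x + (2 * j + 2) * integrand (j + 1) x) x := by
  have hnum := hasDerivAt_pow (2 * j + 1) x
  have hden := ((hasDerivAt_pow 2 x).const_sub 1).fun_pow (j + 1)
  refine (hnum.div hden (pow_ne_zero _ hx)).congr_deriv ?_
  simp only [integrand, Nat.add_sub_cancel]
  push_cast
  field_simp
  ring

lemma intervalIntegrable_integrand (j : ℕ) {l : ℝ} (hl : l ∈ Set.Ioo (-1) 1) :
    IntervalIntegrable (integrand j) MeasureTheory.volume 0 l := by
  refine ContinuousOn.intervalIntegrable (ContinuousOn.div (by fun_prop) (by fun_prop) ?_)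
  exact fun x hx => pow_ne_zero _ (one_sub_sq_ne_zero (uIcc_zero_subset_Ioo hl hx))

lemma integral_integrand_reduction (j : ℕ) {l : ℝ} (hl : l ∈ Set.Ioo (-1) 1) :
    (2 * j + 2) * (∫ t in (0 : ℝ)..l, integrand (j + 1) t)
        + (2 * j + 1) * ∫ t in (0 : ℝ)..l, integrand j t
      = l ^ (2 * j + 1) / (1 - l ^ 2) ^ (j + 1) := by
  have hj := (intervalIntegrable_integrand j hl).const_mul (2 * j + 1 : ℝ)
  have hj' := (intervalIntegrable_integrand (j + 1) hl).const_mul (2 * j + 2 : ℝ)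
  have hftc := intervalIntegral.integral_eq_sub_of_hasDerivAt
    (fun x hx => hasDerivAt_reduction j (one_sub_sq_ne_zero (uIcc_zero_subset_Ioo hl hx)))
    (hj.add hj')
  rw [intervalIntegral.integral_add hj hj', intervalIntegral.integral_const_mul,
    intervalIntegral.integral_const_mul, zero_pow (by omega), zero_div, sub_zero] at hftc
  linarith

lemma integral_one_div_one_sub_sq {l : ℝ} (hl : l ∈ Set.Ioo (-1) 1) :
    ∫ t in (0 : ℝ)..l, 1 / (1 - t ^ 2) = 1 / 2 * log ((1 + l) / (1 - l)) := by
  have hint : IntervalIntegrable (fun t : ℝ => 1 / (1 - t ^ 2)) MeasureTheory.volume 0 l := by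
    convert intervalIntegrable_integrand 0 hl using 1
    funext t
    simp [integrand]
  rw [intervalIntegral.integral_eq_sub_of_hasDerivAt
    (fun x hx => hasDerivAt_half_log_div (uIcc_zero_subset_Ioo hl hx)) hint]
  simp

lemma integral_integrand_eq (j : ℕ) {l : ℝ} (hl : l ∈ Set.Ioo (-1) 1) (hl0 : l ≠ 0) :
    ∫ t in (0 : ℝ)..l, integrand j t = logCoeff j * log ((1 + l) / (1 - l)) + rationalPart j l := by
  induction j with
  | zero =>
    simpa [integrand, logCoeff, rationalPart, poch_zero] using integral_one_div_one_sub_sq hl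
  | succ j ih =>
    have hrec := integral_integrand_reduction j hl
    rw [ih, ← rationalPart_succ j hl0] at hrec
    apply mul_left_cancel₀ (by positivity : (2 * j + 2 : ℝ) ≠ 0)
    linear_combination hrec - log ((1 + l) / (1 - l)) * logCoeff_succ j

theorem stmt0_general (j : ℕ) (l : ℝ) (hl0 : 0 < l) (hl1 : l < 1) :
    ((∫ t in (0:ℝ)..l, t ^ (2 * j) / (1 - t ^ 2) ^ (j + 1)) =
      (-1 : ℝ) ^ j * (poch (1/2) j / (2 * (Nat.factorial j : ℝ))) *
        Real.log ((1 + l) / (1 - l))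
      + (1 / (2 * (j : ℝ) * l)) *
          ∑ n ∈ Finset.range j,
            (-1 : ℝ) ^ n * (poch (1/2 - (j : ℝ)) n / poch (1 - (j : ℝ)) n) *
              (l ^ 2 / (1 - l ^ 2)) ^ (j - n))
    ∧ (∫ t in (0:ℝ)..l, 1 / (1 - t ^ 2)) = (1/2) * Real.log ((1 + l) / (1 - l)) := by
  have hl : l ∈ Set.Ioo (-1) 1 := ⟨by linarith, hl1⟩
  exact ⟨integral_integrand_eq j hl hl0.ne', integral_one_div_one_sub_sq hl⟩

theorem stmt0 (j : ℕ) (hj : 1 ≤ j) (l : ℝ) (hl0 : 0 < l) (hl1 : l < 1) :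
    ((∫ t in (0:ℝ)..l, t ^ (2 * j) / (1 - t ^ 2) ^ (j + 1)) =
      (-1 : ℝ) ^ j * (poch (1/2) j / (2 * (Nat.factorial j : ℝ))) *
        Real.log ((1 + l) / (1 - l))
      + (1 / (2 * (j : ℝ) * l)) *
          ∑ n ∈ Finset.range j,
            (-1 : ℝ) ^ n * (poch (1/2 - (j : ℝ)) n / poch (1 - (j : ℝ)) n) *
              (l ^ 2 / (1 - l ^ 2)) ^ (j - n))
    ∧ (∫ t in (0:ℝ)..l, 1 / (1 - t ^ 2)) = (1/2) * Real.log ((1 + l) / (1 - l)) :=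
  stmt0_general j l hl0 hl1
end

section
/- For every real a > 0 and every λ with 0 < λ < 1, one has ∫₀^λ t^{2a}/(1−t²)^{a+1} dt ≤ λ^{2a+1}/(2a·(1−λ²)^a). -/
open Real

/-!
With `F t = t ^ (2a+1) / (1 - t²) ^ a / (2a)` one has
`F' t = t ^ 2a / (1 - t²) ^ (a+1) + t ^ 2a / (1 - t²) ^ a / (2a)`, and the second summand is
nonnegative on `(0, 1)`. Hence the integral is at most `F l - F 0 = F l`.
-/

open Set intervalIntegral

theorem continuousOn_rpow_div_one_sub_sq_rpow {p : ℝ} (hp : 0 ≤ p) (q : ℝ) :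
    ContinuousOn (fun t : ℝ => t ^ p / (1 - t ^ 2) ^ q) (Ioo (-1) 1) := by
  have hpos : ∀ t ∈ Ioo (-1 : ℝ) 1, 0 < 1 - t ^ 2 := fun t ht => by
    nlinarith [ht.1, ht.2]
  exact (continuous_rpow_const hp).continuousOn.div
    ((continuous_const.sub (continuous_pow 2)).continuousOn.rpow_const
      fun t ht => .inl (hpos t ht).ne') fun t ht => (rpow_pos_of_pos (hpos t ht) q).ne'

theorem hasDerivAt_rpow_div_one_sub_sq_rpow {a t : ℝ} (ha : a ≠ 0) (ht : t ≠ 0)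
    (ht1 : t ^ 2 < 1) :
    HasDerivAt (fun t => t ^ (2 * a + 1) / (1 - t ^ 2) ^ a / (2 * a))
      (t ^ (2 * a) / (1 - t ^ 2) ^ (a + 1) + t ^ (2 * a) / (1 - t ^ 2) ^ a / (2 * a)) t := by
  have hu : 0 < 1 - t ^ 2 := by linarith
  have hw : (1 - t ^ 2) ^ a ≠ 0 := (rpow_pos_of_pos hu a).ne'
  have hnum := hasDerivAt_rpow_const (p := 2 * a + 1) (Or.inl ht)
  have hsq : HasDerivAt (fun t : ℝ => 1 - t ^ 2) (-(2 * t)) t := by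
    simpa using (hasDerivAt_pow 2 t).const_sub 1
  refine ((hnum.div (hsq.rpow_const (.inl hu.ne')) hw).div_const (2 * a)).congr_deriv ?_
  rw [add_sub_cancel_right, rpow_add_one ht, rpow_add_one hu.ne', rpow_sub_one hu.ne']
  field_simp
  ring

theorem stmt1 (a : ℝ) (ha : 0 < a) (l : ℝ) (hl0 : 0 < l) (hl1 : l < 1) :
    (∫ t in (0:ℝ)..l, t ^ (2 * a) / (1 - t ^ 2) ^ (a + 1)) ≤
      l ^ (2 * a + 1) / (2 * a * (1 - l ^ 2) ^ a) := by
  have hIcc : Icc 0 l ⊆ Ioo (-1) 1 := Icc_subset_Ioo (by norm_num) hl1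
  have hsq : ∀ t ∈ Ioo 0 l, t ^ 2 < 1 := fun t ht => by nlinarith [ht.1, ht.2]
  calc (∫ t in (0:ℝ)..l, t ^ (2 * a) / (1 - t ^ 2) ^ (a + 1))
      ≤ l ^ (2 * a + 1) / (1 - l ^ 2) ^ a / (2 * a)
          - 0 ^ (2 * a + 1) / (1 - 0 ^ 2) ^ a / (2 * a) :=
        integral_le_sub_of_hasDeriv_right_of_le hl0.le
          (((continuousOn_rpow_div_one_sub_sq_rpow (by positivity) a).div_const _).mono hIcc)
          (fun t ht => (hasDerivAt_rpow_div_one_sub_sq_rpow ha.ne' ht.1.ne'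
            (hsq t ht)).hasDerivWithinAt)
          ((continuousOn_rpow_div_one_sub_sq_rpow (by positivity) (a + 1)).mono
            hIcc).integrableOn_Icc
          (fun t ht => le_add_of_nonneg_right <| div_nonneg (div_nonneg
            (rpow_nonneg ht.1.le _) (rpow_nonneg (by linarith [hsq t ht]) _)) (by positivity))
    _ = l ^ (2 * a + 1) / (2 * a * (1 - l ^ 2) ^ a) := by
        rw [zero_rpow (by positivity), zero_div, zero_div, sub_zero, div_div,
          mul_comm ((1 - l ^ 2) ^ a)]
end

section
/- For every nonnegative integer n and every real x, Σ_{m=0}^n ((−n)_m (1/2)_m / ((1)_m m!)) x^m = (1/π) ∫₀^π (1 − x·sin²(φ/2))^n dφ. -/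
/-!
Expand `(1 - x sin²(φ/2))ⁿ` binomially and integrate term by term. The `m`-th term contributes
`(n choose m) (-x)ᵐ (1/π) ∫₀^π sin(φ/2)^(2m) dφ`, and by Wallis' formula this normalised
integral is `∏_{i<m} (2i+1)/(2i+2) = (1/2)_m / m!`. Since `(-n)_m = (-1)ᵐ m! (n choose m)` and
`(1)_m = m!`, these are exactly the terms of the hypergeometric sum.
-/

open Real Finset

open Polynomial intervalIntegral

lemma poch_eq_ascPochhammer_eval (a : ℝ) (m : ℕ) : poch a m = (ascPochhammer ℝ m).eval a := by
  induction m with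
  | zero => simp [poch]
  | succ k ih => rw [poch, prod_range_succ, ← poch, ih, ascPochhammer_succ_eval]

lemma poch_one (m : ℕ) : poch 1 m = m.factorial := by
  rw [poch_eq_ascPochhammer_eval, ascPochhammer_eval_one]

lemma poch_neg_natCast (n m : ℕ) : poch (-n) m = (-1) ^ m * m.factorial * n.choose m := by
  rw [poch_eq_ascPochhammer_eval, ascPochhammer_eval_neg_eq_descPochhammer,
    descPochhammer_eval_eq_descFactorial, Nat.descFactorial_eq_factorial_mul_choose]
  push_cast
  ring

lemma poch_one_half_div_factorial (m : ℕ) :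
    poch (1 / 2) m / m.factorial = ∏ i ∈ range m, (2 * (i : ℝ) + 1) / (2 * i + 2) := by
  rw [← poch_one, poch, poch, ← prod_div_distrib]
  refine prod_congr rfl fun i _ => ?_
  field_simp
  ring

lemma integral_sin_pow_even_zero_pi_div_two (m : ℕ) :
    ∫ x in (0 : ℝ)..π / 2, sin x ^ (2 * m) =
      π / 2 * ∏ i ∈ range m, (2 * (i : ℝ) + 1) / (2 * i + 2) := by
  induction m with
  | zero => simp
  | succ k ih =>
    -- the boundary term of the reduction formula vanishes since `sin 0 = cos (π / 2) = 0`
    rw [prod_range_succ_comm, mul_left_comm, ← ih, Nat.mul_succ, integral_sin_pow]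
    norm_cast
    simp [-Nat.cast_add]

lemma integral_sin_half_pow_even (m : ℕ) :
    ∫ φ in (0 : ℝ)..π, sin (φ / 2) ^ (2 * m) =
      π * ∏ i ∈ range m, (2 * (i : ℝ) + 1) / (2 * i + 2) := by
  rw [integral_comp_div (fun u => sin u ^ (2 * m)) two_ne_zero, zero_div,
    integral_sin_pow_even_zero_pi_div_two, smul_eq_mul]
  ring

lemma integral_sin_half_pow_even_div_pi (m : ℕ) :
    1 / π * ∫ φ in (0 : ℝ)..π, sin (φ / 2) ^ (2 * m) = poch (1 / 2) m / m.factorial := by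
  rw [integral_sin_half_pow_even, poch_one_half_div_factorial, ← mul_assoc,
    one_div_mul_cancel pi_ne_zero, one_mul]

lemma one_sub_mul_sin_half_sq_pow (n : ℕ) (x φ : ℝ) :
    (1 - x * sin (φ / 2) ^ 2) ^ n =
      ∑ m ∈ range (n + 1), n.choose m * (-x) ^ m * sin (φ / 2) ^ (2 * m) := by
  rw [sub_eq_add_neg, add_comm, add_pow]
  refine sum_congr rfl fun m _ => ?_
  rw [pow_mul]
  ring

theorem stmt3 (n : ℕ) (x : ℝ) :
    ∑ m ∈ Finset.range (n + 1),
        poch (-(n : ℝ)) m * poch (1/2) m / (poch 1 m * (Nat.factorial m : ℝ)) * x ^ m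
      = (1 / π) * ∫ phi in (0:ℝ)..π, (1 - x * Real.sin (phi / 2) ^ 2) ^ n := by
  have hint : ∀ m ∈ range (n + 1), IntervalIntegrable
      (fun φ : ℝ => n.choose m * (-x) ^ m * sin (φ / 2) ^ (2 * m)) MeasureTheory.volume 0 π :=
    fun m _ => Continuous.intervalIntegrable (by fun_prop) 0 π
  simp_rw [one_sub_mul_sin_half_sq_pow, integral_finsetSum hint, mul_sum, integral_const_mul]
  refine sum_congr rfl fun m _ => ?_
  rw [mul_left_comm, integral_sin_half_pow_even_div_pi, poch_neg_natCast, poch_one]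
  field_simp
  ring
end

section
/- For every real x with 0 < x < 1, the series s₁(x) = Σ_{j=2}^∞ ((1/2)_j·(1/2−j))/((1−j)·j·j!) · (−x)^j converges and s₁(x) = (x/2 − 1)·ln((1+√(1+x))/2) − (1/2)·√(1+x) + 1/2 + x/2. -/
/-!
Write `aₙ = (1/2)ₙ / n!`, the coefficients of the binomial series of `(1 - u)^(-1/2)`, so that
the series is `F(u) = ∑ aₙ (1/2 - n) / ((1 - n) n) uⁿ` at `u = -x`. The operator `θ(θ - 1)`,
`θ = u d/du`, cancels the denominator: `u² F''(u) = ∑_{n ≥ 2} (n - 1/2) aₙ uⁿ`, and the recurrence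
`(n + 1) aₙ₊₁ = (n + 1/2) aₙ` sums the right-hand side in closed form in `√(1 - u)`. The claimed
closed form `G` has `u² G''(u)` equal to the same expression, so `G'' = F''` on `(-1, 1)` (at
`u = 0` both equal `9/16`); since `F` and `G` vanish to first order at `0`, integrating twice
gives `F = G`.
-/

open Real Finset

open Set

section PowerSeries

def derivCoeff (c : ℕ → ℝ) (n : ℕ) : ℝ := (n + 1) * c (n + 1)

lemma summable_mul_pow_of_abs_le {c : ℕ → ℝ} {C : ℝ} (hc : ∀ n, |c n| ≤ C) {t : ℝ}
    (ht : |t| < 1) : Summable fun n => c n * t ^ n := by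
  refine .of_norm_bounded ((summable_geometric_of_lt_one (abs_nonneg t) ht).mul_left C)
    fun n => ?_
  rw [norm_mul, norm_pow, norm_eq_abs, norm_eq_abs]
  exact mul_le_mul_of_nonneg_right (hc n) (by positivity)

lemma summable_derivCoeff_mul_pow {c : ℕ → ℝ}
    (hc : ∀ t : ℝ, |t| < 1 → Summable fun n => c n * t ^ n) {t : ℝ} (ht : |t| < 1) :
    Summable fun n => derivCoeff c n * t ^ n := by
  obtain ⟨r, htr, hr1⟩ := exists_between ht
  have hr : 0 < r := (abs_nonneg t).trans_lt htr
  have hcr := (hc r (by rwa [abs_of_pos hr])).abs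
  set M := ∑' n, |c n * r ^ n|
  set q := |t| / r
  have hq : ‖q‖ < 1 := by
    rwa [norm_eq_abs, abs_of_nonneg (by positivity), div_lt_one hr]
  have hgeom : Summable fun n : ℕ => ((n : ℝ) + 1) * q ^ n := by
    simpa [add_mul] using
      (summable_pow_mul_geometric_of_norm_lt_one 1 hq).add (summable_geometric_of_norm_lt_one hq)
  refine .of_norm_bounded (hgeom.mul_left (M / r)) fun n => ?_
  have hM : |c (n + 1)| * r ^ (n + 1) ≤ M := by
    have := hcr.le_tsum (n + 1) fun _ _ => abs_nonneg _
    rwa [abs_mul, abs_pow, abs_of_pos hr] at this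
  have hsplit : ‖derivCoeff c n * t ^ n‖
      = |c (n + 1)| * r ^ (n + 1) * (((n : ℝ) + 1) * q ^ n) / r := by
    rw [derivCoeff, norm_eq_abs, abs_mul, abs_mul, abs_pow, div_pow]
    field_simp
    rw [abs_of_nonneg (by positivity : (0 : ℝ) ≤ n + 1)]
    ring
  rw [hsplit, mul_div_right_comm]
  gcongr

lemma hasDerivAt_tsum_mul_pow {c : ℕ → ℝ}
    (hc : ∀ t : ℝ, |t| < 1 → Summable fun n => c n * t ^ n) {t : ℝ} (ht : |t| < 1) :
    HasDerivAt (fun y => ∑' n, c n * y ^ n) (∑' n, derivCoeff c n * t ^ n) t := by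
  obtain ⟨r, htr, hr1⟩ := exists_between ht
  have hr : 0 < r := (abs_nonneg t).trans_lt htr
  have hbound : Summable fun n : ℕ => |(n : ℝ) * c n| * r ^ (n - 1) := by
    refine (summable_nat_add_iff 1).mp ?_
    simpa [derivCoeff, abs_mul, abs_of_pos hr] using
      (summable_derivCoeff_mul_pow hc (t := r) (by rwa [abs_of_pos hr])).abs
  have hderiv := hasDerivAt_tsum_of_isPreconnected (t := Ioo (-r) r) (y₀ := 0)
    (g := fun n y => c n * y ^ n) (g' := fun n y => (n : ℝ) * c n * y ^ (n - 1)) hbound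
    isOpen_Ioo isPreconnected_Ioo
    (fun n y _ => by
      simpa [mul_comm, mul_assoc, mul_left_comm] using (hasDerivAt_pow n y).const_mul (c n))
    (fun n y hy => by
      rw [norm_mul, norm_pow, norm_eq_abs, norm_eq_abs]
      gcongr
      exact abs_le.mpr ⟨hy.1.le, hy.2.le⟩)
    ⟨by linarith, hr⟩ (hc 0 (by simp)) (abs_lt.mp htr)
  refine hderiv.congr_deriv ?_
  rw [tsum_eq_zero_add' (by simpa [derivCoeff] using summable_derivCoeff_mul_pow hc ht)]
  simp [derivCoeff]

lemma HasSum.natCast_mul_mul_pow_of_derivCoeff {c : ℕ → ℝ} {t H : ℝ}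
    (h : HasSum (fun n => derivCoeff c n * t ^ n) H) :
    HasSum (fun n => n * c n * t ^ n) (t * H) := by
  rw [← hasSum_nat_add_iff' 1]
  simp only [range_one, sum_singleton, CharP.cast_eq_zero, zero_mul, sub_zero]
  refine (h.mul_left t).congr_fun fun n => ?_
  simp only [derivCoeff]
  push_cast
  ring

lemma tsum_mul_zero_pow (c : ℕ → ℝ) : ∑' n, c n * (0 : ℝ) ^ n = c 0 := by
  rw [tsum_eq_single 0 fun n hn => by simp [hn]]
  simp

lemma eqOn_Ioo_of_hasDerivAt {f g f' : ℝ → ℝ} {a b x₀ : ℝ}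
    (hf : ∀ y ∈ Ioo a b, HasDerivAt f (f' y) y) (hg : ∀ y ∈ Ioo a b, HasDerivAt g (f' y) y)
    (hx₀ : x₀ ∈ Ioo a b) (h₀ : f x₀ = g x₀) : EqOn f g (Ioo a b) :=
  isOpen_Ioo.eqOn_of_deriv_eq isPreconnected_Ioo
    (fun y hy => (hf y hy).differentiableAt.differentiableWithinAt)
    (fun y hy => (hg y hy).differentiableAt.differentiableWithinAt)
    (fun y hy => (hf y hy).deriv.trans (hg y hy).deriv.symm) hx₀ h₀

end PowerSeries

section InvSqrtCoeff

lemma poch_eq_eval_ascPochhammer (a : ℝ) (n : ℕ) : poch a n = (ascPochhammer ℝ n).eval a := by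
  induction n with
  | zero => simp [poch]
  | succ n ih => rw [poch, prod_range_succ, ← poch, ih, ascPochhammer_succ_eval]

noncomputable def invSqrtCoeff (n : ℕ) : ℝ := poch (1 / 2) n / n.factorial

lemma invSqrtCoeff_eq_choose (n : ℕ) :
    invSqrtCoeff n = Ring.choose ((1 / 2 : ℝ) + n - 1) n := by
  rw [Ring.choose_eq_smul, Polynomial.descPochhammer_smeval_eq_ascPochhammer,
    Polynomial.ascPochhammer_smeval_eq_eval, invSqrtCoeff, poch_eq_eval_ascPochhammer,
    smul_eq_mul, div_eq_inv_mul]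
  ring_nf

lemma invSqrtCoeff_zero : invSqrtCoeff 0 = 1 := by
  norm_num [invSqrtCoeff, poch]

lemma invSqrtCoeff_one : invSqrtCoeff 1 = 1 / 2 := by
  norm_num [invSqrtCoeff, poch]

lemma invSqrtCoeff_two : invSqrtCoeff 2 = 3 / 8 := by
  norm_num [invSqrtCoeff, poch, prod_range_succ]

lemma succ_mul_invSqrtCoeff_succ (n : ℕ) :
    (n + 1) * invSqrtCoeff (n + 1) = (n + 1 / 2) * invSqrtCoeff n := by
  rw [invSqrtCoeff, invSqrtCoeff, poch, prod_range_succ, ← poch, Nat.factorial_succ]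
  push_cast
  field_simp
  ring

lemma invSqrtCoeff_nonneg (n : ℕ) : 0 ≤ invSqrtCoeff n := by
  rw [invSqrtCoeff, poch]
  positivity

lemma abs_invSqrtCoeff_le_one (n : ℕ) : |invSqrtCoeff n| ≤ 1 := by
  rw [abs_of_nonneg (invSqrtCoeff_nonneg n)]
  induction n with
  | zero => rw [invSqrtCoeff_zero]
  | succ n ih =>
    nlinarith [succ_mul_invSqrtCoeff_succ n, invSqrtCoeff_nonneg n, invSqrtCoeff_nonneg (n + 1)]

lemma hasSum_invSqrtCoeff_mul_pow {t : ℝ} (ht : |t| < 1) :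
    HasSum (fun n => invSqrtCoeff n * t ^ n) (1 / √(1 - t)) := by
  have h := (one_div_one_sub_rpow_hasFPowerSeriesOnBall_zero (1 / 2)).hasSum
    (y := t) (by simpa [Metric.mem_eball, edist_dist] using ht)
  rw [zero_add, ← sqrt_eq_rpow] at h
  simpa only [FormalMultilinearSeries.ofScalars_apply_eq, smul_eq_mul, invSqrtCoeff_eq_choose]
    using h

lemma hasSum_derivCoeff_invSqrtCoeff_mul_pow {t : ℝ} (ht : |t| < 1) :
    HasSum (fun n => derivCoeff invSqrtCoeff n * t ^ n) (1 / (2 * (1 - t) * √(1 - t))) := by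
  have hH := (summable_derivCoeff_mul_pow
    (fun t ht => summable_mul_pow_of_abs_le abs_invSqrtCoeff_le_one ht) ht).hasSum
  set H := ∑' n, derivCoeff invSqrtCoeff n * t ^ n
  -- the recurrence splits `(n + 1) aₙ₊₁ = n aₙ + aₙ / 2`, so `H = t H + 1 / (2 √(1 - t))`
  have hsplit : HasSum (fun n => derivCoeff invSqrtCoeff n * t ^ n) (t * H + 1 / √(1 - t) / 2) :=
    (hH.natCast_mul_mul_pow_of_derivCoeff.add
      ((hasSum_invSqrtCoeff_mul_pow ht).div_const 2)).congr_fun fun n => by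
      rw [derivCoeff, succ_mul_invSqrtCoeff_succ]
      ring
  have h1t : 0 < 1 - t := by linarith [le_abs_self t]
  have hs : 0 < √(1 - t) := sqrt_pos.mpr h1t
  have hH_eq := hH.unique hsplit
  field_simp at hH_eq
  convert hH using 1
  field_simp
  linear_combination -hH_eq

lemma hasSum_sub_half_mul_invSqrtCoeff_mul_pow {t : ℝ} (ht : |t| < 1) :
    HasSum (fun n => (n - 1 / 2) * invSqrtCoeff n * t ^ n)
      (t / (2 * (1 - t) * √(1 - t)) - 1 / √(1 - t) / 2) := by
  have hN := (hasSum_derivCoeff_invSqrtCoeff_mul_pow ht).natCast_mul_mul_pow_of_derivCoeff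
  rw [mul_one_div] at hN
  exact (hN.sub ((hasSum_invSqrtCoeff_mul_pow ht).div_const 2)).congr_fun fun n => by ring

end InvSqrtCoeff

section S1Coeff

-- At `n = 0, 1` a factor of the denominator vanishes, so `s1Coeff 0 = s1Coeff 1 = 0` (`x / 0 = 0`).
noncomputable def s1Coeff (n : ℕ) : ℝ :=
  poch (1 / 2) n * (1 / 2 - n) / ((1 - n) * n * n.factorial)

lemma s1Coeff_zero : s1Coeff 0 = 0 := by
  simp [s1Coeff]

lemma s1Coeff_one : s1Coeff 1 = 0 := by
  simp [s1Coeff]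

lemma s1Coeff_add_two (n : ℕ) :
    s1Coeff (n + 2) = invSqrtCoeff (n + 2) * ((n + 3 / 2) / ((n + 1) * (n + 2))) := by
  have h : (1 : ℝ) - (n + 2) ≠ 0 := by
    rw [sub_ne_zero]
    norm_cast
    omega
  rw [s1Coeff, invSqrtCoeff]
  push_cast
  field_simp
  ring

lemma abs_s1Coeff_le_one (n : ℕ) : |s1Coeff n| ≤ 1 := by
  match n with
  | 0 => simp [s1Coeff_zero]
  | 1 => simp [s1Coeff_one]
  | n + 2 =>
    rw [s1Coeff_add_two, abs_mul]
    refine mul_le_one₀ (abs_invSqrtCoeff_le_one _) (abs_nonneg _) ?_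
    rw [abs_of_pos (by positivity), div_le_one (by positivity)]
    nlinarith [(n.cast_nonneg : (0 : ℝ) ≤ n)]

lemma derivCoeff_derivCoeff_s1Coeff (n : ℕ) :
    derivCoeff (derivCoeff s1Coeff) n = (n + 3 / 2) * invSqrtCoeff (n + 2) := by
  simp only [derivCoeff, s1Coeff_add_two]
  push_cast
  field_simp
  ring

lemma sq_mul_tsum_derivCoeff_derivCoeff_s1Coeff {u : ℝ} (hu : |u| < 1) :
    u ^ 2 * ∑' n, derivCoeff (derivCoeff s1Coeff) n * u ^ n
      = u / (2 * (1 - u) * √(1 - u)) - 1 / √(1 - u) / 2 + 1 / 2 - u / 4 := by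
  have hE := (summable_derivCoeff_mul_pow (fun t ht => summable_derivCoeff_mul_pow
    (fun t ht => summable_mul_pow_of_abs_le abs_s1Coeff_le_one ht) ht) hu).hasSum.mul_left (u ^ 2)
  have hΦ := (hasSum_nat_add_iff' 2).mpr (hasSum_sub_half_mul_invSqrtCoeff_mul_pow hu)
  simp only [sum_range_succ, range_zero, sum_empty, invSqrtCoeff_zero, invSqrtCoeff_one] at hΦ
  refine hE.unique (hΦ.congr_fun fun n => ?_) |>.trans ?_
  · rw [derivCoeff_derivCoeff_s1Coeff]
    push_cast
    ring
  · push_cast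
    ring

end S1Coeff

section ClosedForm

variable {u : ℝ}

noncomputable def s1Closed (u : ℝ) : ℝ :=
  (-u / 2 - 1) * log ((1 + √(1 - u)) / 2) - √(1 - u) / 2 + 1 / 2 - u / 2

noncomputable def s1Closed' (u : ℝ) : ℝ :=
  -log ((1 + √(1 - u)) / 2) / 2 + (u / 2 + 1) / (2 * √(1 - u) * (1 + √(1 - u)))
    + 1 / (4 * √(1 - u)) - 1 / 2

noncomputable def s1Closed'' (u : ℝ) : ℝ :=
  1 / (2 * √(1 - u) * (1 + √(1 - u)))
    + (u + 2) * (1 + 2 * √(1 - u)) / (8 * √(1 - u) ^ 3 * (1 + √(1 - u)) ^ 2)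
    + 1 / (8 * √(1 - u) ^ 3)

lemma hasDerivAt_sqrt_one_sub (hu : u < 1) :
    HasDerivAt (fun u => √(1 - u)) (-(1 / (2 * √(1 - u)))) u := by
  simpa [neg_div] using ((hasDerivAt_id u).const_sub 1).sqrt (sub_pos.mpr hu).ne'

lemma hasDerivAt_log_one_add_sqrt_one_sub (hu : u < 1) :
    HasDerivAt (fun u => log ((1 + √(1 - u)) / 2))
      (-(1 / (2 * √(1 - u) * (1 + √(1 - u))))) u := by
  have hs : 0 < √(1 - u) := sqrt_pos.mpr (by linarith)
  convert (((hasDerivAt_sqrt_one_sub hu).const_add 1).div_const 2).log (by positivity) using 1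
  field_simp

lemma hasDerivAt_s1Closed (hu : u < 1) : HasDerivAt s1Closed (s1Closed' u) u := by
  have hs : 0 < √(1 - u) := sqrt_pos.mpr (by linarith)
  have hlin : HasDerivAt (fun u : ℝ => -u / 2 - 1) (-1 / 2) u := by
    simpa using ((hasDerivAt_id u).neg.div_const 2).sub_const 1
  refine ((((hlin.mul (hasDerivAt_log_one_add_sqrt_one_sub hu)).sub
    ((hasDerivAt_sqrt_one_sub hu).div_const 2)).add_const (1 / 2)).sub
    ((hasDerivAt_id u).div_const 2)).congr_deriv ?_
  rw [s1Closed']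
  field_simp
  ring

lemma hasDerivAt_s1Closed' (hu : u < 1) : HasDerivAt s1Closed' (s1Closed'' u) u := by
  have hs : 0 < √(1 - u) := sqrt_pos.mpr (by linarith)
  have hS := hasDerivAt_sqrt_one_sub hu
  have hden : HasDerivAt (fun u => 2 * √(1 - u) * (1 + √(1 - u)))
      (2 * -(1 / (2 * √(1 - u))) * (1 + √(1 - u)) + 2 * √(1 - u) * -(1 / (2 * √(1 - u)))) u :=
    (hS.const_mul 2).mul (hS.const_add 1)
  have hnum : HasDerivAt (fun u : ℝ => u / 2 + 1) (1 / 2) u :=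
    ((hasDerivAt_id u).div_const 2).add_const 1
  refine (((((hasDerivAt_log_one_add_sqrt_one_sub hu).neg.div_const 2).add
    (hnum.div hden (by positivity))).add
    ((hasDerivAt_const u (1 : ℝ)).div (hS.const_mul 4) (by positivity))).sub_const
      (1 / 2)).congr_deriv ?_
  rw [s1Closed'']
  field_simp
  ring

lemma sq_mul_s1Closed'' (hu : u < 1) :
    u ^ 2 * s1Closed'' u = u / (2 * (1 - u) * √(1 - u)) - 1 / √(1 - u) / 2 + 1 / 2 - u / 4 := by
  have hs : 0 < √(1 - u) := sqrt_pos.mpr (by linarith)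
  have hsq : √(1 - u) ^ 2 = 1 - u := sq_sqrt (by linarith)
  rw [s1Closed'']
  set s := √(1 - u)
  rw [show u = 1 - s ^ 2 by linarith]
  field_simp
  ring

lemma s1Closed_zero : s1Closed 0 = 0 := by
  norm_num [s1Closed]

lemma s1Closed'_zero : s1Closed' 0 = 0 := by
  norm_num [s1Closed']

lemma s1Closed''_zero : s1Closed'' 0 = 9 / 16 := by
  norm_num [s1Closed'']

lemma s1Closed_neg (x : ℝ) :
    s1Closed (-x) = (x / 2 - 1) * log ((1 + √(1 + x)) / 2) - 1 / 2 * √(1 + x) + 1 / 2 + x / 2 := by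
  rw [s1Closed, sub_neg_eq_add]
  ring

end ClosedForm

lemma tsum_s1Coeff_mul_pow {u : ℝ} (hu : u ∈ Ioo (-1 : ℝ) 1) :
    ∑' n, s1Coeff n * u ^ n = s1Closed u := by
  have hc₀ : ∀ t : ℝ, |t| < 1 → Summable fun n => s1Coeff n * t ^ n :=
    fun t ht => summable_mul_pow_of_abs_le abs_s1Coeff_le_one ht
  have hc₁ : ∀ t : ℝ, |t| < 1 → Summable fun n => derivCoeff s1Coeff n * t ^ n :=
    fun t ht => summable_derivCoeff_mul_pow hc₀ ht
  have h0 : (0 : ℝ) ∈ Ioo (-1 : ℝ) 1 := ⟨by norm_num, by norm_num⟩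
  have hderiv₂ : ∀ y ∈ Ioo (-1 : ℝ) 1,
      ∑' n, derivCoeff (derivCoeff s1Coeff) n * y ^ n = s1Closed'' y := by
    intro y hy
    rcases eq_or_ne y 0 with rfl | hy0
    · rw [tsum_mul_zero_pow, derivCoeff_derivCoeff_s1Coeff, invSqrtCoeff_two, s1Closed''_zero]
      norm_num
    · refine mul_left_cancel₀ (pow_ne_zero 2 hy0) ?_
      rw [sq_mul_tsum_derivCoeff_derivCoeff_s1Coeff (abs_lt.mpr hy), sq_mul_s1Closed'' hy.2]
  have hderiv₁ : EqOn (fun y => ∑' n, derivCoeff s1Coeff n * y ^ n) s1Closed' (Ioo (-1) 1) :=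
    eqOn_Ioo_of_hasDerivAt
      (fun y hy => (hasDerivAt_tsum_mul_pow hc₁ (abs_lt.mpr hy)).congr_deriv (hderiv₂ y hy))
      (fun y hy => hasDerivAt_s1Closed' hy.2) h0
      (by simp [tsum_mul_zero_pow, derivCoeff, s1Coeff_one, s1Closed'_zero])
  exact eqOn_Ioo_of_hasDerivAt (f := fun y => ∑' n, s1Coeff n * y ^ n)
    (fun y hy => (hasDerivAt_tsum_mul_pow hc₀ (abs_lt.mpr hy)).congr_deriv (hderiv₁ hy))
    (fun y hy => hasDerivAt_s1Closed hy.2) h0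
    (by simp [tsum_mul_zero_pow, s1Coeff_zero, s1Closed_zero]) hu

theorem stmt14 (x : ℝ) (hx0 : 0 < x) (hx1 : x < 1) :
    HasSum (fun j : ℕ =>
        poch (1/2) (j + 2) * (1/2 - ((j : ℝ) + 2)) /
          ((1 - ((j : ℝ) + 2)) * ((j : ℝ) + 2) * (Nat.factorial (j + 2) : ℝ)) * (-x) ^ (j + 2))
      ((x / 2 - 1) * Real.log ((1 + Real.sqrt (1 + x)) / 2)
        - (1/2) * Real.sqrt (1 + x) + 1/2 + x / 2) := by
  have hu : -x ∈ Ioo (-1 : ℝ) 1 := ⟨by linarith, by linarith⟩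
  have h := (summable_mul_pow_of_abs_le abs_s1Coeff_le_one (abs_lt.mpr hu)).hasSum
  rw [tsum_s1Coeff_mul_pow hu, ← hasSum_nat_add_iff' 2] at h
  simp only [sum_range_succ, range_zero, sum_empty, s1Coeff_zero, s1Coeff_one, zero_mul,
    add_zero, sub_zero, s1Closed_neg] at h
  exact h.congr_fun fun j => by simp only [s1Coeff, Nat.cast_add, Nat.cast_ofNat]
end

section
/- For every λ with 0 < λ < 1 and every k with 0 < k < 1, one has F(λ,k) = K(k) − (1/2) · ∫₀^{(1−λ²)/(1−k²)} dt/√(t·(1+k²t)·(1−t+k²t)). -/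
/-!
Split `K(k) = F(λ,k) + ∫_λ^1`. On `(λ, 1)` put `s = (1 - t²)/(1 - k²)`: then `1 - s + k²s = t²` and
`1 + k²s = (1 - k²t²)/(1 - k²)`, so `s(1 + k²s)(1 - s + k²s) = (t/(1 - k²))² (1 - t²)(1 - k²t²)`,
and `|ds| = 2t dt/(1 - k²)` turns the second integrand into twice the first. The tail `∫_λ^1` is
finite because its integrand is at most `((1 - k²)(1 - t))^{-1/2}`.
-/

open Real MeasureTheory Set intervalIntegral

noncomputable section

def legendreIntegrand (k t : ℝ) : ℝ := 1 / √((1 - t ^ 2) * (1 - k ^ 2 * t ^ 2))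

def legendreTailIntegrand (k s : ℝ) : ℝ := 1 / √(s * (1 + k ^ 2 * s) * (1 - s + k ^ 2 * s))

def legendreTailSubst (k t : ℝ) : ℝ := (1 - t ^ 2) / (1 - k ^ 2)

end

section

variable {k : ℝ}

lemma intervalIntegrable_legendreIntegrand_of_abs_lt_one (hk : k ^ 2 ≤ 1) {l : ℝ} (hl : |l| < 1) :
    IntervalIntegrable (legendreIntegrand k) volume 0 l := by
  refine (ContinuousOn.div continuousOn_const (by fun_prop) fun t ht => ?_).intervalIntegrable
  have htl : |t| ≤ |l| := by
    simpa using abs_sub_le_of_uIcc_subset_uIcc (uIcc_subset_uIcc left_mem_uIcc ht)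
  have ht : t ^ 2 < 1 := by nlinarith [sq_abs t, abs_nonneg t]
  exact (sqrt_pos.2 (mul_pos (by linarith) (by nlinarith))).ne'

lemma legendreIntegrand_le (hk : k ^ 2 < 1) {t : ℝ} (ht0 : 0 ≤ t) (ht1 : t < 1) :
    legendreIntegrand k t ≤ (1 - k ^ 2) ^ (-(1 / 2) : ℝ) * (1 - t) ^ (-(1 / 2) : ℝ) := by
  have hpoly : (1 - k ^ 2) * (1 - t) ≤ (1 - t ^ 2) * (1 - k ^ 2 * t ^ 2) := by
    have hkt : k ^ 2 * t ^ 2 ≤ k ^ 2 := mul_le_of_le_one_right (sq_nonneg k) (by nlinarith)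
    have hfac : 1 - k ^ 2 ≤ (1 + t) * (1 - k ^ 2 * t ^ 2) := by
      nlinarith [mul_nonneg ht0 (sq_nonneg k)]
    nlinarith
  rw [← mul_rpow (by linarith) (by linarith), rpow_neg (by nlinarith), ← sqrt_eq_rpow, ← one_div]
  exact one_div_le_one_div_of_le (sqrt_pos.2 (by nlinarith)) (sqrt_le_sqrt hpoly)

lemma intervalIntegrable_legendreIntegrand_one (hk : k ^ 2 < 1) {l : ℝ} (hl0 : 0 ≤ l)
    (hl1 : l ≤ 1) : IntervalIntegrable (legendreIntegrand k) volume l 1 := by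
  have hdom : IntervalIntegrable
      (fun t => (1 - k ^ 2) ^ (-(1 / 2) : ℝ) * (1 - t) ^ (-(1 / 2) : ℝ)) volume l 1 := by
    have hrpow : IntervalIntegrable (fun x : ℝ => x ^ (-(1 / 2) : ℝ)) volume (1 - l) (1 - 1) :=
      intervalIntegrable_rpow' (by norm_num)
    simpa using (hrpow.comp_sub_left 1).const_mul ((1 - k ^ 2) ^ (-(1 / 2) : ℝ))
  rw [intervalIntegrable_iff_integrableOn_Ioo_of_le hl1] at hdom ⊢
  refine hdom.mono' (by unfold legendreIntegrand; fun_prop : Measurable _).aestronglyMeasurable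
    (ae_restrict_of_forall_mem measurableSet_Ioo fun t ht => ?_)
  rw [norm_of_nonneg (by unfold legendreIntegrand; positivity)]
  exact legendreIntegrand_le hk (hl0.trans ht.1.le) ht.2

lemma hasDerivAt_legendreTailSubst (t : ℝ) :
    HasDerivAt (legendreTailSubst k) (-(2 * t) / (1 - k ^ 2)) t := by
  unfold legendreTailSubst
  refine (((hasDerivAt_pow 2 t).const_sub 1).div_const (1 - k ^ 2)).congr_deriv ?_
  norm_num

lemma injOn_legendreTailSubst (hk : k ^ 2 < 1) {l : ℝ} (hl : 0 ≤ l) :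
    InjOn (legendreTailSubst k) (Ioo l 1) := by
  intro t₁ ht₁ t₂ ht₂ h
  have hsq : t₁ ^ 2 = t₂ ^ 2 := by
    have := (div_left_inj' (by linarith : 1 - k ^ 2 ≠ 0)).1 h
    linarith
  exact (pow_left_inj₀ (hl.trans ht₁.1.le) (hl.trans ht₂.1.le) two_ne_zero).1 hsq

lemma legendreTailSubst_image_Ioo (hk : k ^ 2 < 1) {l : ℝ} (hl : 0 ≤ l) :
    legendreTailSubst k '' Ioo l 1 = Ioo 0 (legendreTailSubst k l) := by
  have hk' : 0 < 1 - k ^ 2 := by linarith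
  ext s
  simp only [mem_image, mem_Ioo, legendreTailSubst]
  constructor
  · rintro ⟨t, ⟨hlt, ht1⟩, rfl⟩
    exact ⟨div_pos (by nlinarith) hk', div_lt_div_of_pos_right (by nlinarith) hk'⟩
  · rintro ⟨hs0, hsl⟩
    rw [lt_div_iff₀ hk'] at hsl
    have hu : l ^ 2 < 1 - (1 - k ^ 2) * s := by linarith
    refine ⟨√(1 - (1 - k ^ 2) * s), ⟨(lt_sqrt hl).2 hu, ?_⟩, ?_⟩
    · rw [sqrt_lt' one_pos]
      nlinarith
    · rw [sq_sqrt (by nlinarith)]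
      field_simp
      ring

lemma abs_deriv_mul_legendreTailIntegrand (hk : k ^ 2 < 1) {t : ℝ} (ht0 : 0 < t) (ht1 : t < 1) :
    |-(2 * t) / (1 - k ^ 2)| * legendreTailIntegrand k (legendreTailSubst k t)
      = 2 * legendreIntegrand k t := by
  have hk' : 0 < 1 - k ^ 2 := by linarith
  have hP : 0 < (1 - t ^ 2) * (1 - k ^ 2 * t ^ 2) := mul_pos (by nlinarith) (by nlinarith)
  set s := legendreTailSubst k t with hs
  have hfactor : s * (1 + k ^ 2 * s) * (1 - s + k ^ 2 * s)
      = (t / (1 - k ^ 2)) ^ 2 * ((1 - t ^ 2) * (1 - k ^ 2 * t ^ 2)) := by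
    rw [hs, legendreTailSubst]
    field_simp
    ring
  rw [legendreTailIntegrand, legendreIntegrand, hfactor, sqrt_mul (sq_nonneg _),
    sqrt_sq (by positivity), abs_div, abs_neg, abs_of_pos (by positivity : (0 : ℝ) < 2 * t),
    abs_of_pos hk']
  field_simp

lemma integral_legendreIntegrand_tail (hk : k ^ 2 < 1) {l : ℝ} (hl0 : 0 ≤ l) (hl1 : l ≤ 1) :
    ∫ t in l..1, legendreIntegrand k t
      = 1 / 2 * ∫ s in 0..legendreTailSubst k l, legendreTailIntegrand k s := by
  have hX : 0 ≤ legendreTailSubst k l := div_nonneg (by nlinarith) (by linarith)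
  rw [integral_of_le hl1, integral_of_le hX, integral_Ioc_eq_integral_Ioo,
    integral_Ioc_eq_integral_Ioo, ← legendreTailSubst_image_Ioo hk hl0,
    integral_image_eq_integral_abs_deriv_smul measurableSet_Ioo
      (fun t _ => (hasDerivAt_legendreTailSubst t).hasDerivWithinAt)
      (injOn_legendreTailSubst hk hl0),
    setIntegral_congr_fun measurableSet_Ioo fun t ht => (smul_eq_mul _ _).trans
      (abs_deriv_mul_legendreTailIntegrand hk (hl0.trans_lt ht.1) ht.2),
    MeasureTheory.integral_const_mul]
  ring

end

theorem stmt19 (l k : ℝ) (hl0 : 0 < l) (hl1 : l < 1) (hk0 : 0 < k) (hk1 : k < 1) :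
    (∫ t in (0:ℝ)..l, 1 / Real.sqrt ((1 - t ^ 2) * (1 - k ^ 2 * t ^ 2)))
      = (∫ t in (0:ℝ)..1, 1 / Real.sqrt ((1 - t ^ 2) * (1 - k ^ 2 * t ^ 2)))
        - (1/2) * ∫ t in (0:ℝ)..((1 - l ^ 2) / (1 - k ^ 2)),
            1 / Real.sqrt (t * (1 + k ^ 2 * t) * (1 - t + k ^ 2 * t)) := by
  have hk : k ^ 2 < 1 := by nlinarith
  have hsplit := integral_add_adjacent_intervals
    (intervalIntegrable_legendreIntegrand_of_abs_lt_one hk.le (by rwa [abs_of_pos hl0]))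
    (intervalIntegrable_legendreIntegrand_one hk hl0.le hl1.le)
  rw [integral_legendreIntegrand_tail hk hl0.le hl1.le] at hsplit
  unfold legendreIntegrand legendreTailIntegrand legendreTailSubst at hsplit
  linarith
end
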